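/- Let ξ ∈ ℝ⁴ be a point not lying on the boundary of the future light cone V (i.e. ξ₀ ≠ √(ξ₁² + ξ₂² + ξ₃²)). Then lim_{t→+∞} t^{−2} · π^{−2} ∫_{ℝ⁴} χ_V(tξ+x) Q(tξ+x) e^{−‖x‖²} dx = χ_V(ξ) Q(ξ). In other words, λ₀(ξ) = χ_V(ξ) Q(ξ) + o(‖ξ‖²) as ‖ξ‖ → ∞ away from the cone boundary. -/

import Mathlib

open MeasureTheory

/-- The future light cone `V = {p : p₀ ≥ √(p₁² + p₂² + p₃²)}` in `ℝ⁴`. -/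
def futureCone : Set (EuclideanSpace ℝ (Fin 4)) :=
  {p | Real.sqrt (p 1 ^ 2 + p 2 ^ 2 + p 3 ^ 2) ≤ p 0}

/-- The Minkowski quadratic form `Q(p) = p₀² − p₁² − p₂² − p₃²`. -/
def minkQ (p : EuclideanSpace ℝ (Fin 4)) : ℝ :=
  p 0 ^ 2 - p 1 ^ 2 - p 2 ^ 2 - p 3 ^ 2

/-- `λ₀(ξ) = π⁻² ∫ χ_V(ξ+x) Q(ξ+x) e^{−‖x‖²} dx`. -/
noncomputable def lambda0 (ξ : EuclideanSpace ℝ (Fin 4)) : ℝ :=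
  (Real.pi ^ 2)⁻¹ *
    ∫ x, futureCone.indicator (fun _ => (1 : ℝ)) (ξ + x) * minkQ (ξ + x) * Real.exp (-‖x‖ ^ 2)

/-- Auxiliary: the integrand `χ_V(p) Q(p)`. -/
noncomputable def lcF (p : EuclideanSpace ℝ (Fin 4)) : ℝ :=
  futureCone.indicator (fun _ => (1 : ℝ)) p * minkQ p

lemma continuous_proj (i : Fin 4) :
    Continuous (fun p : EuclideanSpace ℝ (Fin 4) => p i) :=
  (continuous_apply i).comp (PiLp.continuous_ofLp 2 _)

lemma continuous_minkQ : Continuous minkQ := by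
  unfold minkQ
  exact (((((continuous_proj (0)).pow 2).sub ((continuous_proj (1)).pow 2)).sub
    ((continuous_proj (2)).pow 2)).sub ((continuous_proj (3)).pow 2))

lemma continuous_coneS :
    Continuous (fun p : EuclideanSpace ℝ (Fin 4) =>
      Real.sqrt (p 1 ^ 2 + p 2 ^ 2 + p 3 ^ 2)) :=
  Real.continuous_sqrt.comp
    ((((continuous_proj (1)).pow 2).add ((continuous_proj (2)).pow 2)).add
      ((continuous_proj (3)).pow 2) |>.congr (by intro p; rfl))

lemma measurableSet_futureCone : MeasurableSet futureCone :=
  (isClosed_le continuous_coneS (continuous_proj (0))).measurableSet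

lemma measurable_lcF : Measurable lcF :=
  (measurable_const.indicator measurableSet_futureCone).mul continuous_minkQ.measurable

lemma norm_sq_eq (p : EuclideanSpace ℝ (Fin 4)) :
    ‖p‖ ^ 2 = p 0 ^ 2 + p 1 ^ 2 + p 2 ^ 2 + p 3 ^ 2 := by
  rw [EuclideanSpace.norm_eq, Real.sq_sqrt (by positivity)]
  simp [Fin.sum_univ_four, Real.norm_eq_abs, sq_abs]

lemma abs_lcF_le (p : EuclideanSpace ℝ (Fin 4)) : |lcF p| ≤ ‖p‖ ^ 2 := by
  by_cases hp : p ∈ futureCone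
  · simp only [lcF, Set.indicator_of_mem hp, one_mul]
    rw [norm_sq_eq, abs_le]
    unfold minkQ
    constructor <;>
      nlinarith [sq_nonneg (p 0), sq_nonneg (p 1), sq_nonneg (p 2), sq_nonneg (p 3)]
  · simp only [lcF, Set.indicator_of_notMem hp, zero_mul, abs_zero]
    positivity

lemma mem_futureCone_smul {t : ℝ} (ht : 0 < t) (p : EuclideanSpace ℝ (Fin 4)) :
    t • p ∈ futureCone ↔ p ∈ futureCone := by
  simp only [futureCone, Set.mem_setOf_eq, PiLp.smul_apply, smul_eq_mul]
  rw [show (t * p 1) ^ 2 + (t * p 2) ^ 2 + (t * p 3) ^ 2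
      = t ^ 2 * (p 1 ^ 2 + p 2 ^ 2 + p 3 ^ 2) by ring,
    Real.sqrt_mul (sq_nonneg t), Real.sqrt_sq ht.le, mul_le_mul_iff_right₀ ht]

lemma lcF_smul {t : ℝ} (ht : 0 < t) (p : EuclideanSpace ℝ (Fin 4)) :
    lcF (t • p) = t ^ 2 * lcF p := by
  have hQ : minkQ (t • p) = t ^ 2 * minkQ p := by
    simp only [minkQ, PiLp.smul_apply, smul_eq_mul]; ring
  by_cases hp : p ∈ futureCone
  · rw [lcF, lcF, Set.indicator_of_mem hp, Set.indicator_of_mem ((mem_futureCone_smul ht p).2 hp),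
      hQ]; ring
  · rw [lcF, lcF, Set.indicator_of_notMem hp,
      Set.indicator_of_notMem (fun h => hp ((mem_futureCone_smul ht p).1 h))]; ring

lemma continuousAt_lcF {ξ : EuclideanSpace ℝ (Fin 4)}
    (hξ : ξ 0 ≠ Real.sqrt (ξ 1 ^ 2 + ξ 2 ^ 2 + ξ 3 ^ 2)) : ContinuousAt lcF ξ := by
  rcases lt_or_gt_of_ne hξ with h | h
  · -- outside the cone: lcF = 0 near ξ
    have hU : IsOpen {p : EuclideanSpace ℝ (Fin 4) |
        p 0 < Real.sqrt (p 1 ^ 2 + p 2 ^ 2 + p 3 ^ 2)} :=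
      isOpen_lt (continuous_proj (0)) continuous_coneS
    have heq : lcF =ᶠ[nhds ξ] fun _ => (0 : ℝ) := by
      filter_upwards [hU.mem_nhds h] with p hp
      have hp' : p ∉ futureCone := not_le.2 hp
      simp [lcF, Set.indicator_of_notMem hp']
    exact continuousAt_const.congr heq.symm
  · -- inside the cone: lcF = minkQ near ξ
    have hU : IsOpen {p : EuclideanSpace ℝ (Fin 4) |
        Real.sqrt (p 1 ^ 2 + p 2 ^ 2 + p 3 ^ 2) < p 0} :=
      isOpen_lt continuous_coneS (continuous_proj (0))
    have heq : lcF =ᶠ[nhds ξ] minkQ := by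
      filter_upwards [hU.mem_nhds h] with p hp
      have hp' : p ∈ futureCone := le_of_lt hp
      simp only [lcF]
      rw [Set.indicator_of_mem hp', one_mul]
    exact continuous_minkQ.continuousAt.congr heq.symm

lemma integrable_halfGaussian :
    Integrable (fun v : EuclideanSpace ℝ (Fin 4) => Real.exp (-(1/2) * ‖v‖ ^ 2)) := by
  have h := (GaussianFourier.integrable_cexp_neg_mul_sq_norm_add
    (V := EuclideanSpace ℝ (Fin 4)) (b := (1/2 : ℂ)) (by norm_num) 0 0).norm
  refine h.congr (Filter.Eventually.of_forall fun v => ?_)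
  simp [Complex.norm_exp, ← Complex.ofReal_pow]

lemma integral_gaussian4 :
    ∫ v : EuclideanSpace ℝ (Fin 4), Real.exp (-‖v‖ ^ 2) = Real.pi ^ 2 := by
  have h := GaussianFourier.integral_rexp_neg_mul_sq_norm (V := EuclideanSpace ℝ (Fin 4)) one_pos
  simp only [neg_one_mul] at h
  rw [h]
  simp only [finrank_euclideanSpace, Fintype.card_fin, div_one]
  rw [show ((4:ℕ):ℝ)/2 = ((2:ℕ):ℝ) by norm_num, Real.rpow_natCast]

lemma poly_gauss_bound (a r : ℝ) (ha : 0 ≤ a) (hr : 0 ≤ r) :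
    (a + r) ^ 2 * Real.exp (-r ^ 2) ≤ (2 * a ^ 2 + 4) * Real.exp (-(1/2) * r ^ 2) := by
  set u := Real.exp (-(1/2) * r ^ 2) with hu
  have hu0 : 0 < u := Real.exp_pos _
  have hu1 : u ≤ 1 := Real.exp_le_one_iff.2 (by nlinarith)
  have hexp : Real.exp (-r ^ 2) = u * u := by
    rw [hu, ← Real.exp_add]; ring_nf
  have hru : r ^ 2 * u ≤ 2 := by
    have h1 : (1/2) * r ^ 2 + 1 ≤ Real.exp ((1/2) * r ^ 2) := by
      have := Real.add_one_le_exp ((1/2) * r ^ 2); linarith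
    have h2 : Real.exp ((1/2) * r ^ 2) * u = 1 := by
      rw [hu, ← Real.exp_add]; ring_nf; exact Real.exp_zero
    nlinarith
  rw [hexp]
  nlinarith [mul_le_mul_of_nonneg_right hru hu0.le, mul_le_mul_of_nonneg_right hu1 hu0.le,
    sq_nonneg (a - r), sq_nonneg a, hu0.le, mul_nonneg (sq_nonneg a) hu0.le,
    mul_nonneg (mul_nonneg ha ha) hu0.le]

/-- Away from the boundary of the light cone,
`lim_{t→∞} t⁻² λ₀(tξ) = χ_V(ξ) Q(ξ)`, i.e. `λ₀(ξ) = χ_V(ξ)Q(ξ) + o(‖ξ‖²)`. -/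
theorem lambda0_asymptotic (ξ : EuclideanSpace ℝ (Fin 4))
    (hξ : ξ 0 ≠ Real.sqrt (ξ 1 ^ 2 + ξ 2 ^ 2 + ξ 3 ^ 2)) :
    Filter.Tendsto (fun t : ℝ => (t ^ 2)⁻¹ * lambda0 (t • ξ)) Filter.atTop
      (nhds (futureCone.indicator (fun _ => (1 : ℝ)) ξ * minkQ ξ)) := by
  have hπ : (Real.pi : ℝ) ≠ 0 := Real.pi_ne_zero
  -- Step 1: dominated convergence for the rescaled integral
  have hint : Filter.Tendsto
      (fun t : ℝ => ∫ x, lcF (ξ + t⁻¹ • x) * Real.exp (-‖x‖ ^ 2)) Filter.atTop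
      (nhds (∫ x : EuclideanSpace ℝ (Fin 4), lcF ξ * Real.exp (-‖x‖ ^ 2))) := by
    apply tendsto_integral_filter_of_dominated_convergence
      (bound := fun x => (2 * ‖ξ‖ ^ 2 + 4) * Real.exp (-(1/2) * ‖x‖ ^ 2))
    · refine Filter.Eventually.of_forall fun t => ?_
      have hc : Continuous fun x : EuclideanSpace ℝ (Fin 4) => ξ + t⁻¹ • x :=
        continuous_const.add (continuous_const_smul _)
      exact ((measurable_lcF.comp hc.measurable).mul
        ((Real.continuous_exp.comp (continuous_norm.pow 2).neg).measurable)).aestronglyMeasurable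
    · filter_upwards [Filter.eventually_ge_atTop (1 : ℝ)] with t ht
      refine Filter.Eventually.of_forall fun x => ?_
      have ht0 : (0 : ℝ) < t := lt_of_lt_of_le one_pos ht
      have h1 : ‖ξ + t⁻¹ • x‖ ≤ ‖ξ‖ + ‖x‖ := by
        calc ‖ξ + t⁻¹ • x‖ ≤ ‖ξ‖ + ‖t⁻¹ • x‖ := norm_add_le _ _
          _ ≤ ‖ξ‖ + ‖x‖ := by
              rw [norm_smul, Real.norm_eq_abs, abs_of_pos (inv_pos.2 ht0)]
              have : t⁻¹ ≤ 1 := inv_le_one_of_one_le₀ ht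
              nlinarith [norm_nonneg x]
      have h2 : |lcF (ξ + t⁻¹ • x)| ≤ (‖ξ‖ + ‖x‖) ^ 2 := by
        refine le_trans (abs_lcF_le _) ?_
        nlinarith [norm_nonneg (ξ + t⁻¹ • x), norm_nonneg ξ, norm_nonneg x]
      have h3 := poly_gauss_bound ‖ξ‖ ‖x‖ (norm_nonneg _) (norm_nonneg _)
      rw [Real.norm_eq_abs, abs_mul, abs_of_pos (Real.exp_pos _)]
      calc |lcF (ξ + t⁻¹ • x)| * Real.exp (-‖x‖ ^ 2)
          ≤ (‖ξ‖ + ‖x‖) ^ 2 * Real.exp (-‖x‖ ^ 2) :=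
            mul_le_mul_of_nonneg_right h2 (Real.exp_pos _).le
        _ ≤ (2 * ‖ξ‖ ^ 2 + 4) * Real.exp (-(1/2) * ‖x‖ ^ 2) := h3
    · exact integrable_halfGaussian.const_mul _
    · refine Filter.Eventually.of_forall fun x => ?_
      have hx : Filter.Tendsto (fun t : ℝ => ξ + t⁻¹ • x) Filter.atTop (nhds ξ) := by
        have h0 : Filter.Tendsto (fun t : ℝ => t⁻¹) Filter.atTop (nhds 0) :=
          tendsto_inv_atTop_zero
        have := h0.smul_const x
        rw [zero_smul] at this
        simpa using (tendsto_const_nhds (x := ξ) (f := Filter.atTop)).add this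
      exact (((continuousAt_lcF hξ).tendsto).comp hx).mul tendsto_const_nhds
  -- Step 2: evaluate the limit integral
  have hval : (∫ x : EuclideanSpace ℝ (Fin 4), lcF ξ * Real.exp (-‖x‖ ^ 2))
      = lcF ξ * Real.pi ^ 2 := by
    rw [integral_const_mul, integral_gaussian4]
  rw [hval] at hint
  have key : Filter.Tendsto
      (fun t : ℝ => (Real.pi ^ 2)⁻¹ * ∫ x, lcF (ξ + t⁻¹ • x) * Real.exp (-‖x‖ ^ 2))
      Filter.atTop (nhds (lcF ξ)) := by
    have := hint.const_mul ((Real.pi ^ 2)⁻¹)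
    rwa [show (Real.pi ^ 2)⁻¹ * (lcF ξ * Real.pi ^ 2) = lcF ξ by field_simp] at this
  -- Step 3: identify the two expressions for large t
  refine Filter.Tendsto.congr' ?_ key
  filter_upwards [Filter.eventually_ge_atTop (1 : ℝ)] with t ht
  have ht0 : (0 : ℝ) < t := lt_of_lt_of_le one_pos ht
  have hrw : ∀ x : EuclideanSpace ℝ (Fin 4), t • ξ + x = t • (ξ + t⁻¹ • x) := fun x => by
    rw [smul_add, smul_smul, mul_inv_cancel₀ ht0.ne', one_smul]
  have hlam : lambda0 (t • ξ)
      = (Real.pi ^ 2)⁻¹ * ∫ x, t ^ 2 * (lcF (ξ + t⁻¹ • x) * Real.exp (-‖x‖ ^ 2)) := by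
    unfold lambda0
    congr 1
    refine integral_congr_ae (Filter.Eventually.of_forall fun x => ?_)
    show futureCone.indicator (fun _ => (1:ℝ)) (t • ξ + x) * minkQ (t • ξ + x)
        * Real.exp (-‖x‖ ^ 2) = t ^ 2 * (lcF (ξ + t⁻¹ • x) * Real.exp (-‖x‖ ^ 2))
    rw [show futureCone.indicator (fun _ => (1:ℝ)) (t • ξ + x) * minkQ (t • ξ + x)
        = lcF (t • ξ + x) from rfl, hrw x, lcF_smul ht0]
    ring
  rw [hlam, integral_const_mul]
  field_simp
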